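/- Let R be a dwindling convergent SRS over a finite alphabet Σ in which, additionally, the right-hand side of every rule has length at most 1. Let α be a nonempty irreducible string and let W be a minimal-length string satisfying α·W ↔*_R W. Then W is a prefix of α. -/

import Mathlib

/- Strings over an alphabet `σ` are modelled as `List σ`; a finite string
rewriting system is a finite list of rules `(l, r)`. -/

namespace SRS

variable {σ : Type*}

/-- One-step rewrite relation: `u →_R v`. -/
def Step (R : List (List σ × List σ)) (u v : List σ) : Prop :=
  ∃ x y l r, (l, r) ∈ R ∧ u = x ++ l ++ y ∧ v = x ++ r ++ y

/-- `u →*_R v`: reflexive-transitive closure. -/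
def Reduces (R : List (List σ × List σ)) : List σ → List σ → Prop :=
  Relation.ReflTransGen (Step R)

/-- `u ↔*_R v`: reflexive-symmetric-transitive closure. -/
def Equiv (R : List (List σ × List σ)) : List σ → List σ → Prop :=
  Relation.EqvGen (Step R)

/-- `u ↓_R v`: joinability, i.e. a common reduct exists. -/
def Joins (R : List (List σ × List σ)) : List σ → List σ → Prop :=
  Relation.Join (Reduces R)

/-- A string is irreducible if no rule applies to it. -/
def Irreducible (R : List (List σ × List σ)) (u : List σ) : Prop :=
  ∀ v, ¬ Step R u v

/-- `u →!_R v`: `v` is an `R`-normal form of `u`. -/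
def NormalizesTo (R : List (List σ × List σ)) (u v : List σ) : Prop :=
  Reduces R u v ∧ Irreducible R v

/-- Terminating: no infinite chain of rewrite steps. -/
def Terminating (R : List (List σ × List σ)) : Prop :=
  ¬ ∃ f : ℕ → List σ, ∀ n, Step R (f n) (f (n + 1))

def Confluent (R : List (List σ × List σ)) : Prop :=
  ∀ t s₁ s₂, Reduces R t s₁ → Reduces R t s₂ →
    ∃ t', Reduces R s₁ t' ∧ Reduces R s₂ t'

def Convergent (R : List (List σ × List σ)) : Prop :=
  Terminating R ∧ Confluent R

/-- Dwindling: every right-hand side is a proper prefix of its left-hand side. -/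
def Dwindling (R : List (List σ × List σ)) : Prop :=
  ∀ p ∈ R, p.2 <+: p.1 ∧ p.2 ≠ p.1

/-- Monadic: length-reducing with right-hand sides of length at most 1. -/
def Monadic (R : List (List σ × List σ)) : Prop :=
  ∀ p ∈ R, p.2.length < p.1.length ∧ p.2.length ≤ 1

/-- `MP α`: normal forms of `p ++ s` with `p` a prefix of `α` and `s` a single
symbol or the empty string. -/
def MP (R : List (List σ × List σ)) (α : List σ) : Set (List σ) :=
  { γ | ∃ p s, p <+: α ∧ s.length ≤ 1 ∧ NormalizesTo R (p ++ s) γ }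

end SRS

/-!
A minimal solution `W` is irreducible, since rewriting `W` once gives a shorter solution, so by
confluence `α ++ W →* W`. As `α` and `W` are irreducible, every redex in such a reduction
straddles the boundary between a prefix of `α` and the remaining suffix of `W`; because each
right-hand side is a prefix of its left-hand side of length at most one, the step leaves a
prefix of `α` on the left. Hence `W = w ++ z` with `α ++ w →* γ`, `γ <+: α` and `W = γ ++ z`.
Then `w = γ` is itself a solution, and minimality forces `z = []`.
-/

namespace SRS

variable {σ : Type*} {R : List (List σ × List σ)}

theorem Step.append_left {u v : List σ} (a : List σ) (h : Step R u v) :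
    Step R (a ++ u) (a ++ v) := by
  obtain ⟨x, y, l, r, hmem, rfl, rfl⟩ := h
  exact ⟨a ++ x, y, l, r, hmem, by simp, by simp⟩

theorem Step.append_right {u v : List σ} (a : List σ) (h : Step R u v) :
    Step R (u ++ a) (v ++ a) := by
  obtain ⟨x, y, l, r, hmem, rfl, rfl⟩ := h
  exact ⟨x, y ++ a, l, r, hmem, by simp, by simp⟩

theorem Reduces.equiv {u v : List σ} (h : Reduces R u v) : Equiv R u v :=
  Relation.EqvGen.reflTransGen_le_eqvGen _ _ _ h

theorem Confluent.joins_of_equiv (hc : Confluent R) {u v : List σ} (h : Equiv R u v) :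
    Joins R u v :=
  (Relation.equivalence_join (r := Relation.ReflTransGen (Step R)) hc).eqvGen_iff.mp
    (Relation.EqvGen.mono (fun _ b hab => ⟨b, .single hab, .refl⟩) _ _ h)

theorem Irreducible.of_infix {u p : List σ} (h : Irreducible R u) (hp : p <:+: u) :
    Irreducible R p := by
  obtain ⟨s, t, rfl⟩ := hp
  rintro _ ⟨x, y, l, r, hmem, rfl, -⟩
  exact h _ ⟨s ++ x, y ++ t, l, r, hmem, by simp, rfl⟩

theorem Irreducible.eq_of_reduces {u v : List σ} (h : Irreducible R u) (hr : Reduces R u v) :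
    u = v := by
  rcases hr.cases_head with rfl | ⟨w, hw, -⟩
  · rfl
  · exact absurd hw (h w)

theorem Dwindling.length_lt_of_step (hdw : Dwindling R) {u v : List σ} (h : Step R u v) :
    v.length < u.length := by
  obtain ⟨x, y, l, r, hmem, rfl, rfl⟩ := h
  obtain ⟨hpre, hne⟩ := hdw _ hmem
  have : r.length < l.length :=
    hpre.length_le.lt_of_ne fun he => hne (hpre.sublist.eq_of_length he)
  simp only [List.length_append]
  omega

theorem Dwindling.irreducible_of_minimal_solution (hdw : Dwindling R) {α W : List σ}
    (hW : Equiv R (α ++ W) W)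
    (hmin : ∀ W' : List σ, Equiv R (α ++ W') W' → W.length ≤ W'.length) :
    Irreducible R W := by
  intro u hu
  have hsol : Equiv R (α ++ u) u :=
    .trans _ _ _ (.symm _ _ (.rel _ _ (hu.append_left α))) (.trans _ _ _ hW (.rel _ _ hu))
  exact absurd (hmin u hsol) (not_le.mpr (hdw.length_lt_of_step hu))

theorem Step.exists_prefix_of_irreducible_append (hdw : Dwindling R)
    (hrhs : ∀ p ∈ R, p.2.length ≤ 1) {γ y u : List σ} (hγ : Irreducible R γ)
    (hy : Irreducible R y) (h : Step R (γ ++ y) u) :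
    ∃ γ₁ y₁ y₂, γ₁ <+: γ ∧ y = y₁ ++ y₂ ∧ u = γ₁ ++ y₂ ∧ Step R (γ ++ y₁) γ₁ := by
  obtain ⟨x, z, l, r, hmem, hu, rfl⟩ := h
  rw [List.append_assoc, List.append_eq_append_iff] at hu
  rcases hu with ⟨a, rfl, rfl⟩ | ⟨c, rfl, hlz⟩
  · exact absurd ⟨a, z, l, r, hmem, by simp, rfl⟩ (hy _)
  rcases List.append_eq_append_iff.mp hlz with ⟨a, rfl, rfl⟩ | ⟨b, rfl, rfl⟩
  · exact absurd ⟨x, a, l, r, hmem, by simp, rfl⟩ (hγ _)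
  have hc : c ≠ [] := by
    rintro rfl
    exact hy _ ⟨[], z, _, r, hmem, by simp, rfl⟩
  -- the redex keeps at least one letter of `γ`, and `r` is at most one letter long
  have hrc : r <+: c :=
    List.prefix_of_prefix_length_le (hdw _ hmem).1 (List.prefix_append c b)
      ((hrhs _ hmem).trans (List.length_pos_iff.mpr hc))
  refine ⟨x ++ r, b, z, (List.prefix_append_right_inj x).mpr hrc, rfl, by simp, ?_⟩
  exact ⟨x, [], c ++ b, r, hmem, by simp, by simp⟩

theorem Reduces.exists_prefix_of_irreducible_append (hdw : Dwindling R)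
    (hrhs : ∀ p ∈ R, p.2.length ≤ 1) {γ y v : List σ} (hγ : Irreducible R γ)
    (hy : Irreducible R y) (h : Reduces R (γ ++ y) v) :
    ∃ γ' w z, γ' <+: γ ∧ y = w ++ z ∧ v = γ' ++ z ∧ Reduces R (γ ++ w) γ' := by
  generalize hs : γ ++ y = s at h
  induction h using Relation.ReflTransGen.head_induction_on generalizing γ y with
  | refl => exact ⟨γ, [], y, List.prefix_refl γ, by simp, hs.symm, by simpa using .refl⟩
  | head hstep _ ih =>
    subst hs
    obtain ⟨γ₁, y₁, y₂, hγ₁, rfl, rfl, hstep₁⟩ :=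
      hstep.exists_prefix_of_irreducible_append hdw hrhs hγ hy
    obtain ⟨γ', w, z, hγ', rfl, rfl, hred⟩ :=
      ih (hγ.of_infix hγ₁.isInfix) (hy.of_infix (List.suffix_append y₁ y₂).isInfix) rfl
    refine ⟨γ', y₁ ++ w, z, hγ'.trans hγ₁, by simp, rfl, ?_⟩
    exact .head (by simpa using hstep₁.append_right w) hred

end SRS

theorem minimal_fixed_point_prefix_of_special_dwindling_general {σ : Type*}
    (R : List (List σ × List σ)) (hdw : SRS.Dwindling R) (hconv : SRS.Convergent R)
    (hrhs : ∀ p ∈ R, p.2.length ≤ 1)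
    (α : List σ) (hαirr : SRS.Irreducible R α)
    (W : List σ) (hW : SRS.Equiv R (α ++ W) W)
    (hmin : ∀ W' : List σ, SRS.Equiv R (α ++ W') W' → W.length ≤ W'.length) :
    W <+: α := by
  have hWirr := hdw.irreducible_of_minimal_solution hW hmin
  obtain ⟨t, hαW, hWt⟩ := hconv.2.joins_of_equiv hW
  obtain rfl := hWirr.eq_of_reduces hWt
  obtain ⟨γ, w, z, hγα, rfl, hwz, hred⟩ :=
    hαW.exists_prefix_of_irreducible_append hdw hrhs hαirr hWirr
  obtain rfl : w = γ := List.append_cancel_right hwz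
  have hlen := hmin w hred.equiv
  obtain rfl : z = [] := List.eq_nil_of_length_eq_zero (by rw [List.length_append] at hlen; omega)
  simpa using hγα

/-- If `R` is dwindling and convergent and moreover every
right-hand side has length at most 1, then any minimal-length solution `W` of
`α ++ W ↔*_R W` (for `α` nonempty and irreducible) is a prefix of `α`. -/
theorem minimal_fixed_point_prefix_of_special_dwindling {σ : Type*} [Fintype σ]
    (R : List (List σ × List σ)) (hdw : SRS.Dwindling R) (hconv : SRS.Convergent R)
    (hrhs : ∀ p ∈ R, p.2.length ≤ 1)
    (α : List σ) (hα : α ≠ []) (hαirr : SRS.Irreducible R α)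
    (W : List σ) (hW : SRS.Equiv R (α ++ W) W)
    (hmin : ∀ W' : List σ, SRS.Equiv R (α ++ W') W' → W.length ≤ W'.length) :
    W <+: α :=
  minimal_fixed_point_prefix_of_special_dwindling_general R hdw hconv hrhs α hαirr W hW hmin
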